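/- The Laplace operator Δ̂_σ satisfies the commutation relations [Δ̂_σ, Δ̂_G] = 4k Δ̂_G and [Δ̂_σ, Δ̂_Ḡ] = −4k Δ̂_Ḡ as operators on Schwartz functions on E. -/

import Mathlib

open MeasureTheory Complex
open scoped Real RealInnerProductSpace BigOperators

noncomputable section

/-- `ℝⁿ` as a Euclidean space. -/
abbrev EN (n : ℕ) := EuclideanSpace ℝ (Fin n)

/-- The first order operator `D f(θ) = df_θ[v] + 2πi c ⟨v,θ⟩ f(θ)`; with
`c = σ̄⁻¹` (resp. `c = σ⁻¹`) and `v = b_j` it is `D_{σ,j}` (resp. `D_{σ̄,j}`). -/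
def Dop {n : ℕ} (c : ℂ) (v : EN n) (f : EN n → ℂ) : EN n → ℂ :=
  fun θ => fderiv ℝ f θ v + 2 * (π : ℂ) * I * c * (⟪v, θ⟫ : ℂ) * f θ

/-- The Gram matrix `C_{pq} = ⟨b_p, b_q⟩` of the basis `b`. -/
def Cmat {n : ℕ} (b : Fin n → EN n) : Matrix (Fin n) (Fin n) ℝ :=
  Matrix.of fun p q => ⟪b p, b q⟫

/-- `Δ̂_G = (ik/π)(σ̄/(σ̄−σ))² Σ_{p,q} C^{pq} D_{σ,p} D_{σ,q}`. -/
def DeltaG {n : ℕ} (k : ℕ) (σ : ℂ) (b : Fin n → EN n) (f : EN n → ℂ) : EN n → ℂ :=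
  fun θ => I * (k : ℂ) / (π : ℂ) * (starRingEnd ℂ σ / (starRingEnd ℂ σ - σ)) ^ 2 *
    ∑ p, ∑ q, ((Cmat b)⁻¹ p q : ℂ) *
      Dop (starRingEnd ℂ σ)⁻¹ (b p) (Dop (starRingEnd ℂ σ)⁻¹ (b q) f) θ

/-- `Δ̂_Ḡ = −(ik/π)(σ/(σ−σ̄))² Σ_{p,q} C^{pq} D_{σ̄,p} D_{σ̄,q}`. -/
def DeltaGbar {n : ℕ} (k : ℕ) (σ : ℂ) (b : Fin n → EN n) (f : EN n → ℂ) : EN n → ℂ :=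
  fun θ => -(I * (k : ℂ) / (π : ℂ)) * (σ / (σ - starRingEnd ℂ σ)) ^ 2 *
    ∑ p, ∑ q, ((Cmat b)⁻¹ p q : ℂ) *
      Dop σ⁻¹ (b p) (Dop σ⁻¹ (b q) f) θ

/-- The Laplace operator
`Δ̂_σ = nk + (ik/π)(σσ̄/(σ̄−σ)) Σ_{p,q} C^{pq} D_{σ,p} D_{σ̄,q}`. -/
def DeltaSigma {n : ℕ} (k : ℕ) (σ : ℂ) (b : Fin n → EN n) (f : EN n → ℂ) : EN n → ℂ :=
  fun θ => (n : ℂ) * (k : ℂ) * f θ +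
    I * (k : ℂ) / (π : ℂ) * (σ * starRingEnd ℂ σ / (starRingEnd ℂ σ - σ)) *
      ∑ p, ∑ q, ((Cmat b)⁻¹ p q : ℂ) *
        Dop (starRingEnd ℂ σ)⁻¹ (b p) (Dop σ⁻¹ (b q) f) θ

/-!
The twisted derivatives `D_{c,v} = ∂_v + 2πi c ⟨v, ·⟩` on Schwartz space satisfy the canonical
commutation relations `⁅D_{a,v}, D_{a',w}⁆ = 2πi (a' - a) ⟨v, w⟩`. The contraction
`∑ C^{pq} D_{c₁,b_p} D_{c₂,b_q}` does not depend on the basis `b`, so it may be computed in an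
orthonormal basis `e`, where it is `∑ᵢ D_{c₁,eᵢ} D_{c₂,eᵢ}`. With `xᵢ = D_{σ,eᵢ}`, `yᵢ = D_{σ̄,eᵢ}`
the `xᵢ` commute among themselves and `⁅yᵢ, xⱼ⁆ = κ δᵢⱼ`, so the Leibniz rule gives
`⁅∑ xᵢ yᵢ, ∑ xⱼ xⱼ⁆ = 2κ ∑ xᵢ xᵢ`; the prefactors of `Δ̂_σ` turn `2κ` into `4k` (and symmetrically
for `Δ̂_Ḡ`, with `-4k`).
-/

open LineDeriv
open scoped SchwartzMap ComplexConjugate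

attribute [local instance] LieRing.ofAssociativeRing

theorem Ring.lie_mul {A : Type*} [Ring A] (a b c : A) : ⁅a, b * c⁆ = ⁅a, b⁆ * c + b * ⁅a, c⁆ := by
  simp only [Ring.lie_def]
  noncomm_ring

theorem Ring.mul_lie {A : Type*} [Ring A] (a b c : A) : ⁅a * b, c⁆ = a * ⁅b, c⁆ + ⁅a, c⁆ * b := by
  simp only [Ring.lie_def]
  noncomm_ring

section CanonicalCommutation
variable {R A ι : Type*} [CommRing R] [Ring A] [Algebra R A] [Fintype ι] [DecidableEq ι]
  {x y : ι → A} {κ : R}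

theorem lie_sum_mul_sum_mul_self_left (hxx : ∀ i j, ⁅x i, x j⁆ = 0)
    (hyx : ∀ i j, ⁅y i, x j⁆ = if i = j then κ • 1 else 0) :
    ⁅∑ i, x i * y i, ∑ j, x j * x j⁆ = (2 * κ) • ∑ i, x i * x i := by
  have key (i j : ι) : ⁅x i * y i, x j * x j⁆ = if i = j then (2 * κ) • (x i * x i) else 0 := by
    rw [Ring.mul_lie, Ring.lie_mul, Ring.lie_mul, hxx, hyx]
    split_ifs with h
    · subst h
      simp only [smul_mul_assoc, mul_smul_comm, one_mul, mul_one, zero_mul, mul_zero, add_zero,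
        mul_add, two_mul, add_smul]
    · simp
  simp only [sum_lie, lie_sum, key, Finset.sum_ite_eq', Finset.mem_univ, if_true, Finset.smul_sum]

theorem lie_sum_mul_sum_mul_self_right (hyy : ∀ i j, ⁅y i, y j⁆ = 0)
    (hxy : ∀ i j, ⁅x i, y j⁆ = if i = j then κ • 1 else 0) :
    ⁅∑ i, x i * y i, ∑ j, y j * y j⁆ = (2 * κ) • ∑ i, y i * y i := by
  have key (i j : ι) : ⁅x i * y i, y j * y j⁆ = if i = j then (2 * κ) • (y i * y i) else 0 := by
    rw [Ring.mul_lie, Ring.lie_mul, Ring.lie_mul, hyy, hxy]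
    split_ifs with h
    · subst h
      simp only [smul_mul_assoc, mul_smul_comm, one_mul, mul_one, zero_mul, mul_zero, zero_add,
        add_mul, two_mul, add_smul]
    · simp
  simp only [sum_lie, lie_sum, key, Finset.sum_ite_eq', Finset.mem_univ, if_true, Finset.smul_sum]

end CanonicalCommutation

section Gram
variable {E ι κ M : Type*} [NormedAddCommGroup E] [InnerProductSpace ℝ E]
  [Fintype ι] [DecidableEq ι] [Fintype κ] [AddCommGroup M] [Module ℝ M]

theorem inner_sum_inv_gram_smul (b : Module.Basis ι ℝ E) (p : ι) (x : E) :
    ⟪∑ q, (Matrix.gram ℝ ⇑b)⁻¹ p q • b q, x⟫ = b.repr x p := by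
  have hC : IsUnit (Matrix.gram ℝ ⇑b).det := (Matrix.isUnit_iff_isUnit_det _).mp
    (Matrix.posDef_gram_of_linearIndependent b.linearIndependent).isUnit
  suffices (innerₛₗ ℝ (∑ q, (Matrix.gram ℝ ⇑b)⁻¹ p q • b q)) = b.coord p from
    LinearMap.congr_fun this x
  refine b.ext fun r => ?_
  have := congr_fun₂ (Matrix.nonsing_inv_mul _ hC) p r
  simp only [Matrix.mul_apply, Matrix.gram_apply, Matrix.one_apply] at this
  simp [this, Finsupp.single_apply, eq_comm]

theorem sum_inv_gram_smul_apply (b : Module.Basis ι ℝ E) (e : OrthonormalBasis κ ℝ E)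
    (B : E →ₗ[ℝ] E →ₗ[ℝ] M) :
    ∑ p, ∑ q, (Matrix.gram ℝ ⇑b)⁻¹ p q • B (b p) (b q) = ∑ i, B (e i) (e i) := by
  calc ∑ p, ∑ q, (Matrix.gram ℝ ⇑b)⁻¹ p q • B (b p) (b q)
      = ∑ p, B (b p) (∑ i, ⟪e i, ∑ q, (Matrix.gram ℝ ⇑b)⁻¹ p q • b q⟫ • e i) := by
        simp only [e.sum_repr', map_sum, map_smul]
    _ = ∑ i, B (∑ p, b.repr (e i) p • b p) (e i) := by
        simp only [real_inner_comm _ (e _), inner_sum_inv_gram_smul, map_sum, map_smul,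
          LinearMap.sum_apply, LinearMap.smul_apply]
        exact Finset.sum_comm
    _ = ∑ i, B (e i) (e i) := by simp only [b.sum_repr]

end Gram

namespace SchwartzMap

variable {E : Type*} [NormedAddCommGroup E] [InnerProductSpace ℝ E]

theorem lineDerivOp_lineDerivOp_apply (v w : E) (f : 𝓢(E, ℂ)) (x : E) :
    ∂_{v} (∂_{w} f) x = fderiv ℝ (fderiv ℝ f) x v w := by
  have hf : DifferentiableAt ℝ (fderiv ℝ f) x := (fderivCLM ℝ E ℂ f).differentiableAt
  simp only [lineDerivOp_apply_eq_fderiv]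
  rw [show (⇑(∂_{w} f : 𝓢(E, ℂ))) = fun y => fderiv ℝ f y w from rfl,
    fderiv_clm_apply hf (differentiableAt_const w)]
  simp

theorem lineDerivOp_comm (v w : E) (f : 𝓢(E, ℂ)) : ∂_{v} (∂_{w} f) = ∂_{w} (∂_{v} f) := by
  ext x
  simp only [lineDerivOp_lineDerivOp_apply]
  exact ((f.smooth 2).contDiffAt.isSymmSndFDerivAt (by simp)) v w

theorem hasTemperateGrowth_inner (v : E) : (fun θ : E ↦ (⟪v, θ⟫ : ℂ)).HasTemperateGrowth := by
  fun_prop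

local notation "M[" w "]" => smulLeftCLM ℂ (fun θ : E ↦ (⟪w, θ⟫ : ℂ))

theorem lineDerivOp_smulLeftCLM_inner (v w : E) (f : 𝓢(E, ℂ)) :
    ∂_{v} (M[w] f) = (⟪w, v⟫ : ℂ) • f + M[w] (∂_{v} f) := by
  ext x
  have hw := hasTemperateGrowth_inner w
  have hd : HasFDerivAt (fun θ : E ↦ (⟪w, θ⟫ : ℂ)) (ofRealCLM.comp (innerSL ℝ w)) x :=
    (ofRealCLM.comp (innerSL ℝ w)).hasFDerivAt
  rw [lineDerivOp_apply_eq_fderiv, smulLeftCLM_apply hw]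
  simp only [add_apply, smul_apply, smulLeftCLM_apply_apply hw, lineDerivOp_apply_eq_fderiv,
    smul_eq_mul]
  rw [fderiv_fun_mul hd.differentiableAt f.differentiableAt, hd.fderiv]
  simp only [add_apply, smul_apply, smul_eq_mul, ContinuousLinearMap.comp_apply, coe_innerSL_apply,
    ofRealCLM_apply]
  ring

theorem lie_lineDerivOpCLM (v w : E) :
    ⁅lineDerivOpCLM ℂ 𝓢(E, ℂ) v, lineDerivOpCLM ℂ 𝓢(E, ℂ) w⁆ = 0 := by
  ext1 f
  simp [Ring.lie_def, lineDerivOp_comm v w f]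

theorem lie_lineDerivOpCLM_smulLeftCLM_inner (v w : E) :
    ⁅lineDerivOpCLM ℂ 𝓢(E, ℂ) v, M[w]⁆ = (⟪w, v⟫ : ℂ) • 1 := by
  ext1 f
  simp [Ring.lie_def, lineDerivOp_smulLeftCLM_inner]

theorem lie_smulLeftCLM_inner (v w : E) : ⁅M[v], M[w]⁆ = 0 := by
  ext1 f
  simp [Ring.lie_def, hasTemperateGrowth_inner, mul_comm]

def twistedDeriv (c : ℂ) : E →ₗ[ℝ] 𝓢(E, ℂ) →L[ℂ] 𝓢(E, ℂ) where
  toFun v := lineDerivOpCLM ℂ 𝓢(E, ℂ) v + (2 * π * I * c) • M[v]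
  map_add' v w := by
    ext1 f
    ext x
    simp only [add_apply, smul_apply, smulLeftCLM_apply_apply (hasTemperateGrowth_inner _)]
    simp only [lineDerivOpCLM_apply, lineDerivOp_left_add, add_apply, inner_add_left, ofReal_add,
      smul_eq_mul]
    ring
  map_smul' r v := by
    ext1 f
    ext x
    simp only [add_apply, smul_apply, smulLeftCLM_apply_apply (hasTemperateGrowth_inner _)]
    simp only [lineDerivOpCLM_apply, lineDerivOp_left_smul, smul_apply, real_smul,
      inner_smul_left, Real.ringHom_apply, ofReal_mul, smul_eq_mul, smul_add]
    ring

theorem twistedDeriv_apply (c : ℂ) (v : E) (f : 𝓢(E, ℂ)) (θ : E) :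
    twistedDeriv c v f θ = fderiv ℝ f θ v + 2 * π * I * c * ⟪v, θ⟫ * f θ := by
  simp [twistedDeriv, hasTemperateGrowth_inner, lineDerivOp_apply_eq_fderiv, mul_assoc]

theorem lie_twistedDeriv (a a' : ℂ) (v w : E) :
    ⁅twistedDeriv a v, twistedDeriv a' w⁆ = (2 * π * I * (a' - a) * ⟪v, w⟫) • 1 := by
  simp only [twistedDeriv, LinearMap.coe_mk, AddHom.coe_mk, add_lie, lie_add, smul_lie, lie_smul,
    lie_lineDerivOpCLM, lie_lineDerivOpCLM_smulLeftCLM_inner, lie_smulLeftCLM_inner]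
  rw [← lie_skew _ (lineDerivOpCLM ℂ 𝓢(E, ℂ) w), lie_lineDerivOpCLM_smulLeftCLM_inner,
    real_inner_comm v w]
  module

theorem lie_twistedDeriv_orthonormal {ι : Type*} [Fintype ι] [DecidableEq ι]
    (e : OrthonormalBasis ι ℝ E) (a a' : ℂ) (i j : ι) :
    ⁅twistedDeriv a (e i), twistedDeriv a' (e j)⁆ =
      if i = j then (2 * π * I * (a' - a)) • 1 else 0 := by
  rw [lie_twistedDeriv, orthonormal_iff_ite.mp e.orthonormal]
  split_ifs <;> simp

variable [FiniteDimensional ℝ E]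

variable (E) in
def twistedLaplacian (c₁ c₂ : ℂ) : 𝓢(E, ℂ) →L[ℂ] 𝓢(E, ℂ) :=
  ∑ i, twistedDeriv c₁ (stdOrthonormalBasis ℝ E i) * twistedDeriv c₂ (stdOrthonormalBasis ℝ E i)

theorem sum_inv_gram_smul_twistedDeriv_mul {ι : Type*} [Fintype ι] [DecidableEq ι]
    (b : Module.Basis ι ℝ E) (c₁ c₂ : ℂ) :
    ∑ p, ∑ q, (Matrix.gram ℝ ⇑b)⁻¹ p q • (twistedDeriv c₁ (b p) * twistedDeriv c₂ (b q)) =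
      twistedLaplacian E c₁ c₂ :=
  sum_inv_gram_smul_apply b (stdOrthonormalBasis ℝ E)
    ((LinearMap.mul ℝ _).compl₁₂ (twistedDeriv c₁) (twistedDeriv c₂))

theorem lie_twistedLaplacian_left (c d : ℂ) :
    ⁅twistedLaplacian E c d, twistedLaplacian E c c⁆ =
      (2 * (2 * π * I * (c - d))) • twistedLaplacian E c c :=
  lie_sum_mul_sum_mul_self_left (fun i j => by simp [lie_twistedDeriv])
    (lie_twistedDeriv_orthonormal (stdOrthonormalBasis ℝ E) d c)

theorem lie_twistedLaplacian_right (c d : ℂ) :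
    ⁅twistedLaplacian E c d, twistedLaplacian E d d⁆ =
      (2 * (2 * π * I * (d - c))) • twistedLaplacian E d d :=
  lie_sum_mul_sum_mul_self_right (fun i j => by simp [lie_twistedDeriv])
    (lie_twistedDeriv_orthonormal (stdOrthonormalBasis ℝ E) c d)

end SchwartzMap

section ChernSimons

open SchwartzMap

variable (E : Type*) [NormedAddCommGroup E] [InnerProductSpace ℝ E] [FiniteDimensional ℝ E]

def DeltaSigmaCLM (k : ℕ) (σ : ℂ) : 𝓢(E, ℂ) →L[ℂ] 𝓢(E, ℂ) :=
  ((Module.finrank ℝ E : ℂ) * k) • 1 +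
    (I * k / π * (σ * conj σ / (conj σ - σ))) • twistedLaplacian E (conj σ)⁻¹ σ⁻¹

def DeltaGCLM (k : ℕ) (σ : ℂ) : 𝓢(E, ℂ) →L[ℂ] 𝓢(E, ℂ) :=
  (I * k / π * (conj σ / (conj σ - σ)) ^ 2) • twistedLaplacian E (conj σ)⁻¹ (conj σ)⁻¹

def DeltaGbarCLM (k : ℕ) (σ : ℂ) : 𝓢(E, ℂ) →L[ℂ] 𝓢(E, ℂ) :=
  (-(I * k / π) * (σ / (σ - conj σ)) ^ 2) • twistedLaplacian E σ⁻¹ σ⁻¹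

variable {E}

theorem laplacian_coeff_mul_commutator_coeff (k : ℂ) {σ : ℂ} (hσ : σ.im ≠ 0) :
    I * k / π * (σ * conj σ / (conj σ - σ)) * (2 * (2 * π * I * ((conj σ)⁻¹ - σ⁻¹))) =
      4 * k := by
  have hσ₀ : σ ≠ 0 := fun h => hσ (by simp [h])
  have hconj : conj σ - σ ≠ 0 := by
    rw [sub_ne_zero]
    exact fun h => hσ (Complex.conj_eq_iff_im.mp h)
  have hσc : conj σ ≠ 0 := (map_ne_zero _).mpr hσ₀
  have hπ : (π : ℂ) ≠ 0 := ofReal_ne_zero.mpr Real.pi_ne_zero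
  field_simp
  linear_combination (-4 * k * (conj σ - σ)) * I_sq

theorem lie_DeltaSigmaCLM_DeltaGCLM (k : ℕ) {σ : ℂ} (hσ : σ.im ≠ 0) :
    ⁅DeltaSigmaCLM E k σ, DeltaGCLM E k σ⁆ = (4 * k : ℂ) • DeltaGCLM E k σ := by
  have h1 : ⁅(1 : 𝓢(E, ℂ) →L[ℂ] 𝓢(E, ℂ)), twistedLaplacian E (conj σ)⁻¹ (conj σ)⁻¹⁆ = 0 :=
    (Commute.one_left _).lie_eq
  simp only [DeltaSigmaCLM, DeltaGCLM, add_lie, smul_lie, lie_smul, h1, lie_twistedLaplacian_left,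
    smul_zero, zero_add, smul_smul, laplacian_coeff_mul_commutator_coeff _ hσ]
  rw [mul_comm]

theorem lie_DeltaSigmaCLM_DeltaGbarCLM (k : ℕ) {σ : ℂ} (hσ : σ.im ≠ 0) :
    ⁅DeltaSigmaCLM E k σ, DeltaGbarCLM E k σ⁆ = -(4 * k : ℂ) • DeltaGbarCLM E k σ := by
  have h1 : ⁅(1 : 𝓢(E, ℂ) →L[ℂ] 𝓢(E, ℂ)), twistedLaplacian E σ⁻¹ σ⁻¹⁆ = 0 :=
    (Commute.one_left _).lie_eq
  have hcoeff : I * k / π * (σ * conj σ / (conj σ - σ)) * (2 * (2 * π * I * (σ⁻¹ - (conj σ)⁻¹))) =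
      -(4 * k) := by
    rw [← laplacian_coeff_mul_commutator_coeff _ hσ]
    ring
  simp only [DeltaSigmaCLM, DeltaGbarCLM, add_lie, smul_lie, lie_smul, h1,
    lie_twistedLaplacian_right, smul_zero, zero_add, smul_smul, hcoeff]
  rw [mul_comm]

end ChernSimons

section Coordinates

open SchwartzMap

variable {n : ℕ}

theorem Cmat_eq_gram (b : Fin n → EN n) : Cmat b = Matrix.gram ℝ b := rfl

theorem Dop_coe (c : ℂ) (v : EN n) (f : 𝓢(EN n, ℂ)) : Dop c v ⇑f = ⇑(twistedDeriv c v f) := by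
  funext θ
  rw [twistedDeriv_apply]
  rfl

theorem sum_inv_Cmat_mul_Dop_Dop (b : Module.Basis (Fin n) ℝ (EN n)) (c₁ c₂ : ℂ)
    (f : 𝓢(EN n, ℂ)) (θ : EN n) :
    ∑ p, ∑ q, ((Cmat ⇑b)⁻¹ p q : ℂ) * Dop c₁ (b p) (Dop c₂ (b q) ⇑f) θ =
      twistedLaplacian (EN n) c₁ c₂ f θ := by
  simp [← sum_inv_gram_smul_twistedDeriv_mul b, Cmat_eq_gram, Dop_coe, Complex.real_smul]

theorem DeltaSigma_coe (k : ℕ) (σ : ℂ) (b : Module.Basis (Fin n) ℝ (EN n)) (f : 𝓢(EN n, ℂ)) :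
    DeltaSigma k σ ⇑b ⇑f = ⇑(DeltaSigmaCLM (EN n) k σ f) := by
  funext θ
  simp [DeltaSigma, DeltaSigmaCLM, sum_inv_Cmat_mul_Dop_Dop]

theorem DeltaG_coe (k : ℕ) (σ : ℂ) (b : Module.Basis (Fin n) ℝ (EN n)) (f : 𝓢(EN n, ℂ)) :
    DeltaG k σ ⇑b ⇑f = ⇑(DeltaGCLM (EN n) k σ f) := by
  funext θ
  simp [DeltaG, DeltaGCLM, sum_inv_Cmat_mul_Dop_Dop]

theorem DeltaGbar_coe (k : ℕ) (σ : ℂ) (b : Module.Basis (Fin n) ℝ (EN n)) (f : 𝓢(EN n, ℂ)) :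
    DeltaGbar k σ ⇑b ⇑f = ⇑(DeltaGbarCLM (EN n) k σ f) := by
  funext θ
  simp [DeltaGbar, DeltaGbarCLM, sum_inv_Cmat_mul_Dop_Dop]

end Coordinates

theorem laplacian_commutators_general
    (n : ℕ) (k : ℕ) (b : Module.Basis (Fin n) ℝ (EN n))
    (σ : ℂ) (hσ : 0 < σ.im) (f : SchwartzMap (EN n) ℂ) :
    (∀ θ : EN n,
      DeltaSigma k σ ⇑b (DeltaG k σ ⇑b ⇑f) θ -
          DeltaG k σ ⇑b (DeltaSigma k σ ⇑b ⇑f) θ =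
        4 * (k : ℂ) * DeltaG k σ ⇑b ⇑f θ) ∧
    ∀ θ : EN n,
      DeltaSigma k σ ⇑b (DeltaGbar k σ ⇑b ⇑f) θ -
          DeltaGbar k σ ⇑b (DeltaSigma k σ ⇑b ⇑f) θ =
        -(4 * (k : ℂ)) * DeltaGbar k σ ⇑b ⇑f θ := by
  have apply_of_lie {A B : 𝓢(EN n, ℂ) →L[ℂ] 𝓢(EN n, ℂ)} {μ : ℂ} (h : ⁅A, B⁆ = μ • B) (θ : EN n) :
      A (B f) θ - B (A f) θ = μ * B f θ := by
    simpa [Ring.lie_def] using congr($h f θ)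
  simp only [DeltaSigma_coe, DeltaG_coe, DeltaGbar_coe]
  exact ⟨apply_of_lie (lie_DeltaSigmaCLM_DeltaGCLM k hσ.ne'),
    apply_of_lie (lie_DeltaSigmaCLM_DeltaGbarCLM k hσ.ne')⟩

/-- the Laplace operator `Δ̂_σ` satisfies the commutation relations
`[Δ̂_σ, Δ̂_G] = 4k Δ̂_G` and `[Δ̂_σ, Δ̂_Ḡ] = −4k Δ̂_Ḡ` on Schwartz functions. -/
theorem laplacian_commutators
    (n : ℕ) (k : ℕ) (hk : 0 < k) (b : Module.Basis (Fin n) ℝ (EN n))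
    (σ : ℂ) (hσ : 0 < σ.im) (f : SchwartzMap (EN n) ℂ) :
    (∀ θ : EN n,
      DeltaSigma k σ ⇑b (DeltaG k σ ⇑b ⇑f) θ -
          DeltaG k σ ⇑b (DeltaSigma k σ ⇑b ⇑f) θ =
        4 * (k : ℂ) * DeltaG k σ ⇑b ⇑f θ) ∧
    ∀ θ : EN n,
      DeltaSigma k σ ⇑b (DeltaGbar k σ ⇑b ⇑f) θ -
          DeltaGbar k σ ⇑b (DeltaSigma k σ ⇑b ⇑f) θ =
        -(4 * (k : ℂ)) * DeltaGbar k σ ⇑b ⇑f θ :=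
  laplacian_commutators_general n k b σ hσ f

end
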